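/- Let λ, c > 0 and t > 0. Then the integral over the closed ball of radius ct in ℝ³ of the absolutely continuous density of X₃(t) equals the probability of at least one change of direction: ∫_{‖x‖ ≤ ct} (λ/(2c))² · (1/(π sinh(λt))) · I₁((λ/c)√(c²t² − ‖x‖²)) / √(c²t² − ‖x‖²) dx = 1 − λt/sinh(λt). -/

import Mathlib

open Real

/-- The modified Bessel function of order one,
`I₁(x) = Σ_{k=0}^∞ (x/2)^{2k+1} / (k! (k+1)!)`. -/
noncomputable def besselI1 (x : ℝ) : ℝ :=
  ∑' k : ℕ, (x / 2) ^ (2 * k + 1) / ((k.factorial : ℝ) * ((k + 1).factorial : ℝ))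

/-! In spherical coordinates, with `R = ct` and `a = λ/c`, the integral is
`4π ∫₀^R r² I₁(a√(R² - r²)) / √(R² - r²) dr`. Expanding `I₁` in its power series and integrating
termwise with `∫₀^R r² (R² - r²)ᵏ dr = 2^(2k+1) k! (k+1)! R^(2k+3) / (2k+3)!` (integration by parts
in `k`), the `k`-th term becomes `a^(2k+1) R^(2k+3) / (2k+3)!`, so the series sums to
`(sinh(aR) - aR) / a²`. The prefactor `λ² / (4c² π sinh λt)` turns `4π (sinh λt - λt) c² / λ²`
into `1 - λt / sinh λt`. -/

open MeasureTheory Set Nat Metric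

lemma integral_sq_mul_sub_sq_pow_succ (R : ℝ) (k : ℕ) :
    (2 * k + 5) * ∫ x in (0 : ℝ)..R, x ^ 2 * (R ^ 2 - x ^ 2) ^ (k + 1)
      = 2 * (k + 1) * R ^ 2 * ∫ x in (0 : ℝ)..R, x ^ 2 * (R ^ 2 - x ^ 2) ^ k := by
  have hu (x : ℝ) : HasDerivAt (fun y ↦ y ^ 3 / 3) (x ^ 2) x :=
    ((hasDerivAt_pow 3 x).div_const 3).congr_deriv (by ring)
  have hv (x : ℝ) : HasDerivAt (fun y ↦ (R ^ 2 - y ^ 2) ^ (k + 1))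
      (-(2 * (k + 1)) * x * (R ^ 2 - x ^ 2) ^ k) x :=
    (((hasDerivAt_pow 2 x).const_sub (R ^ 2)).fun_pow (k + 1)).congr_deriv (by push_cast; ring)
  have hparts := intervalIntegral.integral_mul_deriv_eq_deriv_mul (a := 0) (b := R)
    (fun x _ ↦ hu x) (fun x _ ↦ hv x) (intervalIntegral.intervalIntegrable_pow 2)
    (Continuous.intervalIntegrable (by fun_prop) _ _)
  -- `x⁴ = R² x² - x² (R² - x²)` turns the `x⁴`-integral from the parts formula back into the family
  have hquartic : ∫ x in (0 : ℝ)..R, x ^ 3 / 3 * (-(2 * (k + 1)) * x * (R ^ 2 - x ^ 2) ^ k)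
      = -(2 * (k + 1) / 3) * (R ^ 2 * (∫ x in (0 : ℝ)..R, x ^ 2 * (R ^ 2 - x ^ 2) ^ k)
        - ∫ x in (0 : ℝ)..R, x ^ 2 * (R ^ 2 - x ^ 2) ^ (k + 1)) := by
    rw [← intervalIntegral.integral_const_mul (R ^ 2), ← intervalIntegral.integral_sub
      (Continuous.intervalIntegrable (by fun_prop) _ _)
      (Continuous.intervalIntegrable (by fun_prop) _ _), ← intervalIntegral.integral_const_mul]
    congr 1 with x
    ring
  rw [hquartic] at hparts
  norm_num at hparts
  linear_combination -3 * hparts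

lemma integral_sq_mul_sub_sq_pow (R : ℝ) (k : ℕ) :
    ∫ x in (0 : ℝ)..R, x ^ 2 * (R ^ 2 - x ^ 2) ^ k
      = 2 ^ (2 * k + 1) * k ! * (k + 1)! / (2 * k + 3)! * R ^ (2 * k + 3) := by
  induction k with
  | zero => norm_num [integral_pow]; ring
  | succ k ih =>
    have h := integral_sq_mul_sub_sq_pow_succ R k
    rw [ih] at h
    have h5 : (2 * k + 5 : ℝ) ≠ 0 := by positivity
    rw [← mul_right_inj' h5, h, show 2 * (k + 1) + 3 = (2 * k + 3) + 1 + 1 by ring,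
      factorial_succ (2 * k + 3 + 1), factorial_succ (2 * k + 3), factorial_succ (k + 1),
      factorial_succ k]
    push_cast
    field_simp
    ring

lemma hasSum_pow_div_factorial_add_three (x : ℝ) :
    HasSum (fun k : ℕ ↦ x ^ (2 * k + 3) / (2 * k + 3)!) (sinh x - x) := by
  have h := (hasSum_nat_add_iff' 1).2 (Real.hasSum_sinh x)
  simpa [mul_add, add_assoc] using h

lemma setIntegral_closedBall_fun_norm {E F : Type*} [NormedAddCommGroup E] [NormedSpace ℝ E]
    [Nontrivial E] [FiniteDimensional ℝ E] [MeasurableSpace E] [BorelSpace E]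
    [NormedAddCommGroup F] [NormedSpace ℝ F]
    (μ : Measure E) [μ.IsAddHaarMeasure] (f : ℝ → F) (R : ℝ) :
    ∫ x in closedBall (0 : E) R, f ‖x‖ ∂μ
      = Module.finrank ℝ E • μ.real (ball 0 1) •
          ∫ y in Ioc (0 : ℝ) R, y ^ (Module.finrank ℝ E - 1) • f y := by
  have hind : (closedBall (0 : E) R).indicator (fun x ↦ f ‖x‖)
      = fun x ↦ (Iic R).indicator f ‖x‖ := by
    ext x
    simp [indicator]
  have hsmul : (fun y : ℝ ↦ y ^ (Module.finrank ℝ E - 1) • (Iic R).indicator f y)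
      = (Iic R).indicator (fun y ↦ y ^ (Module.finrank ℝ E - 1) • f y) := by
    ext y
    simp [indicator]
  rw [← integral_indicator measurableSet_closedBall, hind, integral_fun_norm_addHaar, hsmul,
    setIntegral_indicator measurableSet_Iic, Ioi_inter_Iic]

lemma besselI1_mul_div (a : ℝ) {s : ℝ} (hs : s ≠ 0) :
    besselI1 (a * s) / s = ∑' k : ℕ, (a / 2) ^ (2 * k + 1) / (k ! * (k + 1)!) * (s ^ 2) ^ k := by
  rw [besselI1, ← tsum_div_const]
  congr 1 with k
  rw [mul_div_right_comm a s 2, mul_pow, ← pow_mul, pow_succ s]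
  field_simp

lemma hasSum_besselI1_coeff_mul_integral {a : ℝ} (ha : a ≠ 0) (R : ℝ) :
    HasSum (fun k : ℕ ↦ (a / 2) ^ (2 * k + 1) / (k ! * (k + 1)!)
        * (2 ^ (2 * k + 1) * k ! * (k + 1)! / (2 * k + 3)! * R ^ (2 * k + 3)))
      ((sinh (a * R) - a * R) / a ^ 2) := by
  have hterm (k : ℕ) : (a / 2) ^ (2 * k + 1) / (k ! * (k + 1)!)
      * (2 ^ (2 * k + 1) * k ! * (k + 1)! / (2 * k + 3)! * R ^ (2 * k + 3))
        = (a * R) ^ (2 * k + 3) / (2 * k + 3)! / a ^ 2 := by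
    rw [div_pow]
    field_simp
    ring
  simpa only [hterm] using (hasSum_pow_div_factorial_add_three (a * R)).div_const (a ^ 2)

lemma integral_Ioo_sq_mul_besselI1_sqrt_div {a : ℝ} (ha : a ≠ 0) {R : ℝ} (hR : 0 ≤ R) :
    ∫ r in Ioo 0 R, r ^ 2 * (besselI1 (a * √(R ^ 2 - r ^ 2)) / √(R ^ 2 - r ^ 2))
      = (sinh (a * R) - a * R) / a ^ 2 := by
  set c : ℝ → ℕ → ℝ := fun a k ↦ (a / 2) ^ (2 * k + 1) / (k ! * (k + 1)!)
  set g : ℕ → ℝ → ℝ := fun k r ↦ r ^ 2 * (R ^ 2 - r ^ 2) ^ k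
  have hpos {r : ℝ} (hr : r ∈ Ioo 0 R) : 0 < R ^ 2 - r ^ 2 := by nlinarith [hr.1, hr.2]
  have hseries : EqOn (fun r ↦ r ^ 2 * (besselI1 (a * √(R ^ 2 - r ^ 2)) / √(R ^ 2 - r ^ 2)))
      (fun r ↦ ∑' k, c a k * g k r) (Ioo 0 R) := by
    intro r hr
    simp only [c, g]
    rw [besselI1_mul_div a (Real.sqrt_pos.2 (hpos hr)).ne', Real.sq_sqrt (hpos hr).le,
      ← tsum_mul_left]
    congr 1 with k
    ring
  have hg k : ∫ r in Ioo 0 R, g k r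
      = 2 ^ (2 * k + 1) * k ! * (k + 1)! / (2 * k + 3)! * R ^ (2 * k + 3) := by
    rw [← integral_Ioc_eq_integral_Ioo, ← intervalIntegral.integral_of_le hR,
      integral_sq_mul_sub_sq_pow]
  have hg_nonneg k : ∀ r ∈ Ioo 0 R, 0 ≤ g k r := fun r hr ↦ by
    have := hpos hr
    positivity
  have hc_abs k : |c a k| = c |a| k := by simp [c, abs_div, abs_mul]
  have hint k : IntegrableOn (fun r ↦ c a k * g k r) (Ioo 0 R) :=
    (Continuous.integrableOn_Icc (by fun_prop)).mono_set Ioo_subset_Icc_self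
  have hint_norm k : ∫ r in Ioo 0 R, ‖c a k * g k r‖ = c |a| k * ∫ r in Ioo 0 R, g k r := by
    rw [← hc_abs, ← integral_const_mul]
    refine setIntegral_congr_fun measurableSet_Ioo fun r hr ↦ ?_
    simp [abs_of_nonneg (hg_nonneg k r hr)]
  rw [setIntegral_congr_fun measurableSet_Ioo hseries,
    ← integral_tsum_of_summable_integral_norm hint]
  · simp only [integral_const_mul, hg]
    exact (hasSum_besselI1_coeff_mul_integral ha R).tsum_eq
  · simp only [hint_norm, hg]
    exact (hasSum_besselI1_coeff_mul_integral (abs_ne_zero.2 ha) R).summable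

lemma setIntegral_closedBall_besselI1_sqrt_div {a : ℝ} (ha : a ≠ 0) {R : ℝ} (hR : 0 ≤ R) :
    ∫ x in closedBall (0 : EuclideanSpace ℝ (Fin 3)) R,
        besselI1 (a * √(R ^ 2 - ‖x‖ ^ 2)) / √(R ^ 2 - ‖x‖ ^ 2)
      = 4 * π * ((sinh (a * R) - a * R) / a ^ 2) := by
  rw [setIntegral_closedBall_fun_norm volume
      (fun r ↦ besselI1 (a * √(R ^ 2 - r ^ 2)) / √(R ^ 2 - r ^ 2)),
    integral_Ioc_eq_integral_Ioo]
  simp only [finrank_euclideanSpace_fin, measureReal_def, EuclideanSpace.volume_ball_fin_three,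
    smul_eq_mul, nsmul_eq_mul]
  rw [integral_Ioo_sq_mul_besselI1_sqrt_div ha hR]
  norm_num [ENNReal.toReal_ofReal (by positivity : 0 ≤ π * 4 / 3)]
  ring

/-- the total mass of the absolutely continuous component of the
distribution of the random flight `X₃(t)`:
`∫_{‖x‖ ≤ ct} (λ/(2c))² (1/(π sinh λt)) I₁((λ/c)√(c²t² - ‖x‖²))/√(c²t² - ‖x‖²) dx
  = 1 - λt/sinh(λt)`. -/
theorem statement11 (lam c t : ℝ) (hlam : 0 < lam) (hc : 0 < c) (ht : 0 < t) :
    (∫ x in Metric.closedBall (0 : EuclideanSpace ℝ (Fin 3)) (c * t),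
      (lam / (2 * c)) ^ 2 * (1 / (π * Real.sinh (lam * t))) *
        besselI1 (lam / c * Real.sqrt (c ^ 2 * t ^ 2 - ‖x‖ ^ 2)) /
        Real.sqrt (c ^ 2 * t ^ 2 - ‖x‖ ^ 2))
    = 1 - lam * t / Real.sinh (lam * t) := by
  have hsinh : sinh (lam * t) ≠ 0 := (sinh_pos_iff.2 (by positivity)).ne'
  simp_rw [← mul_pow c t 2, mul_div_assoc _ (besselI1 _)]
  rw [integral_const_mul, setIntegral_closedBall_besselI1_sqrt_div (by positivity) (by positivity),
    show lam / c * (c * t) = lam * t by field_simp]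
  field_simp
  ring
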